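/- In any complete first-order theory T, Conant-forking coincides with Conant-dividing for formulas (a formula Conant-forks over M if and only if it Conant-divides over M), and Conant-independence ⫝^{K*} satisfies right extension: if a ⫝^{K*}_M b and c is any tuple, then there is a' ≡_{Mb} a with a' ⫝^{K*}_M bc. -/

import Mathlib

/- Common model-theoretic infrastructure for formalizing
   "NSOP₂ theories are NSOP₁" (arXiv:2206.08512).

   We work with a monster model `𝕄` of a complete theory: a sufficiently
   saturated and strongly homogeneous `L`-structure.  Tuples are functions
   `α → 𝕄`; sets of formulas with parameters are coded via `FmlP`. -/

open FirstOrder Language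

universe u v w

namespace NSOP2Paper

/-- A first-order formula in free variables `α ⊕ Fin n` together with an
`n`-tuple of parameters from `𝕄`. -/
abbrev FmlP (L : FirstOrder.Language.{u, u}) (𝕄 : Type u) (α : Type v) :=
  Σ n : ℕ, L.Formula (α ⊕ Fin n) × (Fin n → 𝕄)

/-- `a ≡_C b` : the tuples `a` and `b` satisfy the same formulas with
parameters from `C`. -/
def EqTpOver (L : FirstOrder.Language.{u, u}) {𝕄 : Type u} [L.Structure 𝕄] (C : Set 𝕄)
    {α : Type v} (a b : α → 𝕄) : Prop :=
  ∀ (n : ℕ) (φ : L.Formula (α ⊕ Fin n)) (c : Fin n → 𝕄), (∀ i, c i ∈ C) →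
    (φ.Realize (Sum.elim a c) ↔ φ.Realize (Sum.elim b c))

/-- `tp(a / C)` is finitely satisfiable in `Ms`: every formula over `C`
satisfied by `a` has a realization by a tuple from `Ms`. -/
def FinSatIn (L : FirstOrder.Language.{u, u}) {𝕄 : Type u} [L.Structure 𝕄] (Ms : Set 𝕄)
    {α : Type v} (a : α → 𝕄) (C : Set 𝕄) : Prop :=
  ∀ (n : ℕ) (φ : L.Formula (α ⊕ Fin n)) (c : Fin n → 𝕄), (∀ i, c i ∈ C) →
    φ.Realize (Sum.elim a c) →
    ∃ m : α → 𝕄, (∀ i, m i ∈ Ms) ∧ φ.Realize (Sum.elim m c)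

/-- `Ms` is the underlying set of a (small) elementary submodel of `𝕄`. -/
def IsElemSubmodel (L : FirstOrder.Language.{u, u}) {𝕄 : Type u} [L.Structure 𝕄] (Ms : Set 𝕄) : Prop :=
  ∃ S : L.ElementarySubstructure 𝕄, (S : Set 𝕄) = Ms

/-- A complete consistent global type (a complete type over the monster `𝕄`)
in variables `α`, coded as the set of formulas-with-parameters it contains. -/
structure GlobalType (L : FirstOrder.Language.{u, u}) (𝕄 : Type u) [L.Structure 𝕄] (α : Type v) where
  carrier : Set (FmlP L 𝕄 α)
  consistent : ∀ t : Finset (FmlP L 𝕄 α), ↑t ⊆ carrier →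
    ∃ a : α → 𝕄, ∀ p ∈ t, p.2.1.Realize (Sum.elim a p.2.2)
  complete : ∀ (n : ℕ) (φ : L.Formula (α ⊕ Fin n)) (c : Fin n → 𝕄),
    (⟨n, (φ, c)⟩ : FmlP L 𝕄 α) ∈ carrier ∨ (⟨n, (φ.not, c)⟩ : FmlP L 𝕄 α) ∈ carrier

variable {L : FirstOrder.Language.{u, u}} {𝕄 : Type u} [L.Structure 𝕄]

/-- The global type `q` is finitely satisfiable in `Ms` (i.e. it is a coheir of
its restriction to `Ms`). -/
def GlobalType.FinSatInM {α : Type v} (q : GlobalType L 𝕄 α) (Ms : Set 𝕄) : Prop :=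
  ∀ t : Finset (FmlP L 𝕄 α), ↑t ⊆ q.carrier →
    ∃ m : α → 𝕄, (∀ i, m i ∈ Ms) ∧ ∀ p ∈ t, p.2.1.Realize (Sum.elim m p.2.2)

/-- `a ⊨ q|_C` : the tuple `a` realizes the restriction of the global type `q`
to parameters from `C`. -/
def RealizesType {α : Type v} (q : GlobalType L 𝕄 α) (a : α → 𝕄) (C : Set 𝕄) : Prop :=
  ∀ (n : ℕ) (φ : L.Formula (α ⊕ Fin n)) (c : Fin n → 𝕄), (∀ i, c i ∈ C) →
    (⟨n, (φ, c)⟩ : FmlP L 𝕄 α) ∈ q.carrier → φ.Realize (Sum.elim a c)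

/-- The global type `q` extends `tp(a / C)`. -/
def ExtendsTpOver {α : Type v} (q : GlobalType L 𝕄 α) (C : Set 𝕄) (a : α → 𝕄) : Prop :=
  ∀ (n : ℕ) (φ : L.Formula (α ⊕ Fin n)) (c : Fin n → 𝕄), (∀ i, c i ∈ C) →
    φ.Realize (Sum.elim a c) → (⟨n, (φ, c)⟩ : FmlP L 𝕄 α) ∈ q.carrier

/-- `B` is a coheir Morley sequence over `Ms` in the global type `q`:
`q` is finitely satisfiable in `Ms` and `B i ⊨ q|_(Ms ∪ B_{<i})`. -/
def MorleyIn {α : Type v} (q : GlobalType L 𝕄 α) (Ms : Set 𝕄) (B : ℕ → α → 𝕄) : Prop :=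
  q.FinSatInM Ms ∧
    ∀ i : ℕ, RealizesType q (B i) (Ms ∪ ⋃ (j : ℕ) (_ : j < i), Set.range (B j))

/-- `B` is a coheir Morley sequence over `Ms`. -/
def CoheirMorley (L : FirstOrder.Language.{u, u}) {𝕄 : Type u} [L.Structure 𝕄] (Ms : Set 𝕄)
    {α : Type v} (B : ℕ → α → 𝕄) : Prop :=
  ∃ q : GlobalType L 𝕄 α, MorleyIn q Ms B

/-- Flatten an `ℕ`-indexed sequence of `α`-tuples into a single tuple. -/
def flatSeq {α : Type v} (I : ℕ → α → 𝕄) : ℕ × α → 𝕄 := fun p => I p.1 p.2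

/-- The sequence `I` is indiscernible over `C`. -/
def IndiscernibleOver (L : FirstOrder.Language.{u, u}) {𝕄 : Type u} [L.Structure 𝕄] (C : Set 𝕄)
    {α : Type v} (I : ℕ → α → 𝕄) : Prop :=
  ∀ (n : ℕ) (f g : Fin n → ℕ), StrictMono f → StrictMono g →
    EqTpOver L C (fun p : Fin n × α => I (f p.1) p.2) (fun p : Fin n × α => I (g p.1) p.2)

/-- `𝕄` is `κ`-saturated: every finitely satisfiable set of formulas in fewer
than `κ` variables over a parameter set of size `< κ` is realized in `𝕄`. -/
def IsSaturated (L : FirstOrder.Language.{u, u}) (𝕄 : Type u) [L.Structure 𝕄] (κ : Cardinal.{u}) : Prop :=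
  ∀ (α : Type u) (A : Set 𝕄), Cardinal.mk α < κ → Cardinal.mk A < κ →
    ∀ Γ : Set (FmlP L 𝕄 α), (∀ p ∈ Γ, ∀ i, p.2.2 i ∈ A) →
      (∀ t : Finset (FmlP L 𝕄 α), ↑t ⊆ Γ →
        ∃ a : α → 𝕄, ∀ p ∈ t, p.2.1.Realize (Sum.elim a p.2.2)) →
      ∃ a : α → 𝕄, ∀ p ∈ Γ, p.2.1.Realize (Sum.elim a p.2.2)

/-- `𝕄` is strongly `κ`-homogeneous: partial elementary maps between tuples of
length `< κ` extend to automorphisms of `𝕄`. -/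
def IsStronglyHomogeneous (L : FirstOrder.Language.{u, u}) (𝕄 : Type u) [L.Structure 𝕄]
    (κ : Cardinal.{u}) : Prop :=
  ∀ (α : Type u), Cardinal.mk α < κ → ∀ a b : α → 𝕄, EqTpOver L (∅ : Set 𝕄) a b →
    ∃ σ : 𝕄 ≃[L] 𝕄, ∀ i, σ (a i) = b i

/-- `𝕄` is a monster model (for smallness degree `κ`): sufficiently saturated
and strongly homogeneous. -/
def IsMonster (L : FirstOrder.Language.{u, u}) (𝕄 : Type u) [L.Structure 𝕄] (κ : Cardinal.{u}) : Prop :=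
  Cardinal.aleph0 < κ ∧ IsSaturated L 𝕄 κ ∧ IsStronglyHomogeneous L 𝕄 κ

/-! ### Tree combinatorics -/

/-- The meet (longest common prefix) of two finite sequences. -/
def meet {A : Type w} [DecidableEq A] : List A → List A → List A
  | a :: as, b :: bs => if a = b then a :: meet as bs else []
  | _, _ => []

/-- The meet of `η 0, …, η i`. -/
def combMeet {A : Type w} [DecidableEq A] {k : ℕ} (η : Fin k → List A) (i : Fin k) : List A :=
  (List.ofFn fun j : Fin i.val => η (Fin.castLE i.2.le j)).foldl meet (η i)

/-- `η 0, …, η (k-1)` is a descending comb: a lexicographically increasing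
antichain such that the meet of `η 0, …, η (i+1)` is a proper initial segment
of the meet of `η 0, …, η i`. -/
def DescendingComb {A : Type w} [DecidableEq A] [LT A] {k : ℕ} (η : Fin k → List A) : Prop :=
  (∀ i j : Fin k, i ≠ j → ¬ η i <+: η j) ∧
  (∀ i j : Fin k, i < j → List.Lex (· < ·) (η i) (η j)) ∧
  (∀ (i : ℕ) (h : i + 1 < k),
    combMeet η ⟨i + 1, h⟩ <+: combMeet η ⟨i, by omega⟩ ∧
    combMeet η ⟨i + 1, h⟩ ≠ combMeet η ⟨i, by omega⟩)

/-! ### Tree properties of theories (witnessed in the monster model) -/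

/-- `T = Th(𝕄)` has `SOP₁`. -/
def HasSOP1 (L : FirstOrder.Language.{u, u}) (𝕄 : Type u) [L.Structure 𝕄] : Prop :=
  ∃ (k m : ℕ) (φ : L.Formula (Fin k ⊕ Fin m)) (b : List Bool → Fin m → 𝕄),
    (∀ σ : ℕ → Bool, ∃ a : Fin k → 𝕄,
      ∀ n : ℕ, φ.Realize (Sum.elim a (b (List.ofFn fun i : Fin n => σ i)))) ∧
    ∀ η₁ η₂ : List Bool, (η₁ ++ [false]) <+: η₂ →
      ¬ ∃ a : Fin k → 𝕄, φ.Realize (Sum.elim a (b η₂)) ∧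
        φ.Realize (Sum.elim a (b (η₁ ++ [true])))

/-- `T = Th(𝕄)` has `SOP₂`. -/
def HasSOP2 (L : FirstOrder.Language.{u, u}) (𝕄 : Type u) [L.Structure 𝕄] : Prop :=
  ∃ (k m : ℕ) (φ : L.Formula (Fin k ⊕ Fin m)) (b : List Bool → Fin m → 𝕄),
    (∀ σ : ℕ → Bool, ∃ a : Fin k → 𝕄,
      ∀ n : ℕ, φ.Realize (Sum.elim a (b (List.ofFn fun i : Fin n => σ i)))) ∧
    ∀ η₁ η₂ : List Bool, ¬ η₁ <+: η₂ → ¬ η₂ <+: η₁ →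
      ¬ ∃ a : Fin k → 𝕄, φ.Realize (Sum.elim a (b η₁)) ∧ φ.Realize (Sum.elim a (b η₂))

/-- `T = Th(𝕄)` has `k`-`DCTP₁`: paths are consistent but descending combs of
size `k` are inconsistent. -/
def HasKDCTP1 (L : FirstOrder.Language.{u, u}) (𝕄 : Type u) [L.Structure 𝕄] (k : ℕ) : Prop :=
  ∃ (r m : ℕ) (φ : L.Formula (Fin r ⊕ Fin m)) (b : List ℕ → Fin m → 𝕄),
    (∀ σ : ℕ → ℕ, ∃ a : Fin r → 𝕄,
      ∀ n : ℕ, φ.Realize (Sum.elim a (b (List.ofFn fun i : Fin n => σ i)))) ∧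
    ∀ η : Fin k → List ℕ, DescendingComb η →
      ¬ ∃ a : Fin r → 𝕄, ∀ i, φ.Realize (Sum.elim a (b (η i)))

/-- `T = Th(𝕄)` has weak `k`-`TP₁`: paths are consistent but any `k` pairwise
incomparable nodes with common pairwise meet are inconsistent. -/
def HasWeakKTP1 (L : FirstOrder.Language.{u, u}) (𝕄 : Type u) [L.Structure 𝕄] (k : ℕ) : Prop :=
  ∃ (r m : ℕ) (φ : L.Formula (Fin r ⊕ Fin m)) (b : List ℕ → Fin m → 𝕄),
    (∀ σ : ℕ → ℕ, ∃ a : Fin r → 𝕄,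
      ∀ n : ℕ, φ.Realize (Sum.elim a (b (List.ofFn fun i : Fin n => σ i)))) ∧
    ∀ η : Fin k → List ℕ,
      (∀ i j, i ≠ j → ¬ η i <+: η j) →
      (∀ i j i' j' : Fin k, i ≠ j → i' ≠ j' → meet (η i) (η j) = meet (η i') (η j')) →
      ¬ ∃ a : Fin r → 𝕄, ∀ i, φ.Realize (Sum.elim a (b (η i)))

/-- `T = Th(𝕄)` has `k`-`DCTP₂`: paths are `k`-inconsistent but descending
combs are consistent. -/
def HasKDCTP2 (L : FirstOrder.Language.{u, u}) (𝕄 : Type u) [L.Structure 𝕄] (k : ℕ) : Prop :=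
  ∃ (r m : ℕ) (φ : L.Formula (Fin r ⊕ Fin m)) (b : List Bool → Fin m → 𝕄),
    (∀ σ : ℕ → Bool, ∀ s : Finset ℕ, s.card = k →
      ¬ ∃ a : Fin r → 𝕄, ∀ n ∈ s,
        φ.Realize (Sum.elim a (b (List.ofFn fun i : Fin n => σ i)))) ∧
    ∀ (l : ℕ) (η : Fin l → List Bool), DescendingComb η →
      ∃ a : Fin r → 𝕄, ∀ i, φ.Realize (Sum.elim a (b (η i)))

/-! ### Kim-dividing and Conant-dividing, with respect to coheir Morley sequences -/

/-- `φ(x, b)` Kim-divides over `Ms`: some coheir Morley sequence over `Ms`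
starting with `b` makes it inconsistent. -/
def KimDivides (L : FirstOrder.Language.{u, u}) {𝕄 : Type u} [L.Structure 𝕄] (Ms : Set 𝕄)
    {α : Type v} {n : ℕ} (φ : L.Formula (α ⊕ Fin n)) (b : Fin n → 𝕄) : Prop :=
  ∃ B : ℕ → Fin n → 𝕄, CoheirMorley L Ms B ∧ B 0 = b ∧
    ¬ ∃ a : α → 𝕄, ∀ i, φ.Realize (Sum.elim a (B i))

/-- `φ(x, b)` Kim-forks over `Ms`: it implies a finite disjunction of formulas
Kim-dividing over `Ms`. -/
def KimForks (L : FirstOrder.Language.{u, u}) {𝕄 : Type u} [L.Structure 𝕄] (Ms : Set 𝕄)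
    {α : Type v} {n : ℕ} (φ : L.Formula (α ⊕ Fin n)) (b : Fin n → 𝕄) : Prop :=
  ∃ (N : ℕ) (m : Fin N → ℕ) (ψ : ∀ j : Fin N, L.Formula (α ⊕ Fin (m j)))
    (c : ∀ j : Fin N, Fin (m j) → 𝕄),
    (∀ j, KimDivides L Ms (ψ j) (c j)) ∧
    ∀ a : α → 𝕄, φ.Realize (Sum.elim a b) → ∃ j, (ψ j).Realize (Sum.elim a (c j))

/-- `φ(x, b)` Conant-divides over `Ms`: every coheir Morley sequence over `Ms`
starting with `b` makes it inconsistent. -/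
def ConantDivides (L : FirstOrder.Language.{u, u}) {𝕄 : Type u} [L.Structure 𝕄] (Ms : Set 𝕄)
    {α : Type v} {n : ℕ} (φ : L.Formula (α ⊕ Fin n)) (b : Fin n → 𝕄) : Prop :=
  ∀ B : ℕ → Fin n → 𝕄, CoheirMorley L Ms B → B 0 = b →
    ¬ ∃ a : α → 𝕄, ∀ i, φ.Realize (Sum.elim a (B i))

/-- `φ(x, b)` Conant-forks over `Ms`. -/
def ConantForks (L : FirstOrder.Language.{u, u}) {𝕄 : Type u} [L.Structure 𝕄] (Ms : Set 𝕄)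
    {α : Type v} {n : ℕ} (φ : L.Formula (α ⊕ Fin n)) (b : Fin n → 𝕄) : Prop :=
  ∃ (N : ℕ) (m : Fin N → ℕ) (ψ : ∀ j : Fin N, L.Formula (α ⊕ Fin (m j)))
    (c : ∀ j : Fin N, Fin (m j) → 𝕄),
    (∀ j, ConantDivides L Ms (ψ j) (c j)) ∧
    ∀ a : α → 𝕄, φ.Realize (Sum.elim a b) → ∃ j, (ψ j).Realize (Sum.elim a (c j))

/-- `a ⫝^{K*}_{Ms} b` : `tp(a/Ms b)` contains no formula Conant-forking
over `Ms`. -/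
def ConantIndep (L : FirstOrder.Language.{u, u}) {𝕄 : Type u} [L.Structure 𝕄] (Ms : Set 𝕄)
    {α : Type v} {β : Type w} (a : α → 𝕄) (b : β → 𝕄) : Prop :=
  ∀ (n : ℕ) (φ : L.Formula (α ⊕ Fin n)) (d : Fin n → 𝕄),
    (∀ i, d i ∈ Ms ∪ Set.range b) → φ.Realize (Sum.elim a d) →
    ¬ ConantForks L Ms φ d

/-! ### Abstract independence relations between sets over models -/

/-- An abstract ternary relation `A ⫝_M B` between subsets of `𝕄` over
(elementary submodels of) `𝕄`. -/
structure IndRel (L : FirstOrder.Language.{u, u}) (𝕄 : Type u) [L.Structure 𝕄] where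
  rel : Set 𝕄 → Set 𝕄 → Set 𝕄 → Prop

/-- A set `S` of `α`-tuples is type-definable over `C`. -/
def TypeDefinableOver (L : FirstOrder.Language.{u, u}) {𝕄 : Type u} [L.Structure 𝕄] (C : Set 𝕄)
    {γ : Type v} (S : Set (γ → 𝕄)) : Prop :=
  ∃ Γ : Set (FmlP L 𝕄 γ), (∀ p ∈ Γ, ∀ i, p.2.2 i ∈ C) ∧
    ∀ g : γ → 𝕄, g ∈ S ↔ ∀ p ∈ Γ, p.2.1.Realize (Sum.elim g p.2.2)

namespace IndRel


/-- Invariance under automorphisms of `𝕄`. -/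
def Invariant (R : IndRel L 𝕄) : Prop :=
  ∀ (σ : 𝕄 ≃[L] 𝕄) (A Ms B : Set 𝕄), R.rel A Ms B →
    R.rel ((⇑σ) '' A) ((⇑σ) '' Ms) ((⇑σ) '' B)

/-- Monotonicity (on both sides). -/
def Mono (R : IndRel L 𝕄) : Prop :=
  ∀ (A A' Ms B B' : Set 𝕄), IsElemSubmodel L Ms → R.rel A Ms B →
    Ms ⊆ A' → A' ⊆ A → Ms ⊆ B' → B' ⊆ B → R.rel A' Ms B'

/-- Existence: for `M ⊆ A, B` there is `A' ≡_M A` with `A' ⫝_M B`. -/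
def Existence (R : IndRel L 𝕄) (κ : Cardinal.{u}) : Prop :=
  ∀ (Ms : Set 𝕄), IsElemSubmodel L Ms → Cardinal.mk Ms < κ →
    ∀ (α β : Type u), Cardinal.mk α < κ → Cardinal.mk β < κ →
      ∀ (a : α → 𝕄) (b : β → 𝕄),
        ∃ a' : α → 𝕄, EqTpOver L Ms a' a ∧
          R.rel (Ms ∪ Set.range a') Ms (Ms ∪ Set.range b)

/-- Right extension. -/
def RightExt (R : IndRel L 𝕄) (κ : Cardinal.{u}) : Prop :=
  ∀ (Ms : Set 𝕄), IsElemSubmodel L Ms → Cardinal.mk Ms < κ →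
    ∀ (α : Type u), Cardinal.mk α < κ → ∀ (a : α → 𝕄) (B C : Set 𝕄),
      Cardinal.mk B < κ → Cardinal.mk C < κ →
      R.rel (Set.range a) Ms B → B ⊆ C →
      ∃ a' : α → 𝕄, EqTpOver L B a' a ∧ R.rel (Set.range a') Ms C

/-- Quasi-strong finite character: for complete types `p = tp(a₀/Ms)` and
`q = tp(b₀/Ms)`, the set of pairs of realizations `(a, b)` with `a ⫝_Ms b`
is type-definable over `Ms`. -/
def QSFC (R : IndRel L 𝕄) (κ : Cardinal.{u}) : Prop :=
  ∀ (Ms : Set 𝕄), IsElemSubmodel L Ms → Cardinal.mk Ms < κ →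
    ∀ (α β : Type u), Cardinal.mk α < κ → Cardinal.mk β < κ →
      ∀ (a₀ : α → 𝕄) (b₀ : β → 𝕄),
        TypeDefinableOver L Ms {g : (α ⊕ β) → 𝕄 |
          EqTpOver L Ms (g ∘ Sum.inl) a₀ ∧ EqTpOver L Ms (g ∘ Sum.inr) b₀ ∧
          R.rel (Set.range (g ∘ Sum.inl)) Ms (Set.range (g ∘ Sum.inr))}

/-- The coheir chain condition. -/
def CoheirChain (R : IndRel L 𝕄) (κ : Cardinal.{u}) : Prop :=
  ∀ (Ms : Set 𝕄), IsElemSubmodel L Ms → Cardinal.mk Ms < κ →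
    ∀ (α β : Type u), Cardinal.mk α < κ → Cardinal.mk β < κ →
      ∀ (a : α → 𝕄) (b : β → 𝕄), R.rel (Set.range a) Ms (Set.range b) →
        ∀ I : ℕ → β → 𝕄, CoheirMorley L Ms I → I 0 = b →
          ∃ I' : ℕ → β → 𝕄, EqTpOver L Ms (flatSeq I') (flatSeq I) ∧
            R.rel (Set.range a) Ms (⋃ i, Set.range (I' i)) ∧
            ∀ i, EqTpOver L (Ms ∪ Set.range a) (I' i) b

/-- `R` implies `⫝ʰ` : `A ⫝_M B` implies `tp(B / M A)` is finitely
satisfiable in `M`. -/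
def StrongerThanH (R : IndRel L 𝕄) : Prop :=
  ∀ (A Ms B : Set 𝕄), IsElemSubmodel L Ms → R.rel A Ms B →
    FinSatIn L Ms (fun x : B => (x : 𝕄)) (Ms ∪ A)

end IndRel

/-- The axioms satisfied by the relations among which `⫝^CK` is weakest. -/
def GoodRel (R : IndRel L 𝕄) (κ : Cardinal.{u}) : Prop :=
  R.StrongerThanH ∧ R.Invariant ∧ R.Mono ∧ R.Existence κ ∧ R.RightExt κ ∧ R.CoheirChain κ

/-- `R` is `⫝^CK` : the weakest relation implying `⫝ʰ` and satisfying
invariance, monotonicity, existence, right extension and the coheir chain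
condition. -/
def IsCK (R : IndRel L 𝕄) (κ : Cardinal.{u}) : Prop :=
  GoodRel R κ ∧ ∀ R' : IndRel L 𝕄, GoodRel R' κ →
    ∀ A Ms B : Set 𝕄, R'.rel A Ms B → R.rel A Ms B

/-- `q` is a canonical global type over `Ms` (w.r.t. the relation `R = ⫝^CK`):
whenever `c ⊨ q|_{Ms b}` we have `b ⫝^CK_{Ms} c`. -/
def IsCanonicalGlobal (R : IndRel L 𝕄) (κ : Cardinal.{u}) (Ms : Set 𝕄) {α : Type v}
    (q : GlobalType L 𝕄 α) : Prop :=
  ∀ (β : Type u), Cardinal.mk β < κ → ∀ (b : β → 𝕄) (c : α → 𝕄),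
    RealizesType q c (Ms ∪ Set.range b) → R.rel (Set.range b) Ms (Set.range c)

/-- A canonical Morley sequence over `Ms`: a coheir Morley sequence in a
canonical coheir. -/
def CanonicalMorley (R : IndRel L 𝕄) (κ : Cardinal.{u}) (Ms : Set 𝕄) {α : Type v}
    (I : ℕ → α → 𝕄) : Prop :=
  ∃ q : GlobalType L 𝕄 α, IsCanonicalGlobal R κ Ms q ∧ MorleyIn q Ms I

/-- `q` is a strong canonical global type over `Ms`. -/
def IsStrongCanonical (R : IndRel L 𝕄) (κ : Cardinal.{u}) (Ms : Set 𝕄) {α : Type v}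
    (q : GlobalType L 𝕄 α) : Prop :=
  ∀ (β : Type u), Cardinal.mk β < κ → ∀ (b : β → 𝕄) (c : α → 𝕄),
    RealizesType q c (Ms ∪ Set.range b) →
    ∀ (γ : Type u), Cardinal.mk γ < κ → ∀ (a : γ → 𝕄),
      ∃ a' : γ → 𝕄, EqTpOver L (Ms ∪ Set.range c) a' a ∧
        ∃ q' : GlobalType L 𝕄 (γ ⊕ α), IsCanonicalGlobal R κ Ms q' ∧
          ExtendsTpOver q' (Ms ∪ Set.range b) (Sum.elim a' c)

/-! ### `M`-invariant ideals and `𝓘`-Kim-dividing -/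

/-- An `Ms`-invariant ideal on the definable subsets of `𝕄` (in variables `α`). -/
structure InvIdeal (L : FirstOrder.Language.{u, u}) (𝕄 : Type u) [L.Structure 𝕄] (Ms : Set 𝕄)
    (α : Type v) where
  mem : Set (α → 𝕄) → Prop
  definable_of_mem : ∀ S, mem S → ∃ (n : ℕ) (ψ : L.Formula (α ⊕ Fin n)) (c : Fin n → 𝕄),
    S = {a : α → 𝕄 | ψ.Realize (Sum.elim a c)}
  union_mem : ∀ S T, mem S → mem T → mem (S ∪ T)
  subset_mem : ∀ S T, mem S →
    (∃ (n : ℕ) (ψ : L.Formula (α ⊕ Fin n)) (c : Fin n → 𝕄),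
      T = {a : α → 𝕄 | ψ.Realize (Sum.elim a c)}) →
    T ⊆ S → mem T
  invariant : ∀ σ : 𝕄 ≃[L] 𝕄, (∀ x ∈ Ms, σ x = x) → ∀ S, mem S →
    mem ((fun a => (⇑σ) ∘ a) '' S)

/-- `φ(x, b)` `𝓘`-Kim-divides over `Ms`. -/
def IKimDivides {Ms : Set 𝕄} {α : Type v} (I : InvIdeal L 𝕄 Ms α) {n : ℕ}
    (φ : L.Formula (α ⊕ Fin n)) (b : Fin n → 𝕄) : Prop :=
  ∃ (B : ℕ → Fin n → 𝕄) (k : ℕ), CoheirMorley L Ms B ∧ B 0 = b ∧ 0 < k ∧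
    ∀ s : Finset ℕ, s.card = k →
      I.mem {a : α → 𝕄 | ∀ i ∈ s, φ.Realize (Sum.elim a (B i))}

/-- `φ(x, b)` `𝓘`-Kim-forks over `Ms`. -/
def IKimForks {Ms : Set 𝕄} {α : Type v} (I : InvIdeal L 𝕄 Ms α) {n : ℕ}
    (φ : L.Formula (α ⊕ Fin n)) (b : Fin n → 𝕄) : Prop :=
  ∃ (N : ℕ) (m : Fin N → ℕ) (ψ : ∀ j : Fin N, L.Formula (α ⊕ Fin (m j)))
    (c : ∀ j : Fin N, Fin (m j) → 𝕄),
    (∀ j, IKimDivides I (ψ j) (c j)) ∧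
    ∀ a : α → 𝕄, φ.Realize (Sum.elim a b) → ∃ j, (ψ j).Realize (Sum.elim a (c j))

/-- `φ(x, b)` `𝓘`-quasi-divides over `Ms`. -/
def IQuasiDivides {Ms : Set 𝕄} {α : Type v} (I : InvIdeal L 𝕄 Ms α) {n : ℕ}
    (φ : L.Formula (α ⊕ Fin n)) (b : Fin n → 𝕄) : Prop :=
  ∃ (mm : ℕ) (b' : Fin mm → Fin n → 𝕄), 0 < mm ∧ (∀ j, EqTpOver L Ms (b' j) b) ∧
    I.mem {a : α → 𝕄 | ∀ j, φ.Realize (Sum.elim a (b' j))}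

/-! ### `h^⫝`-inconsistency and the derived relation `⫝'` -/

/-- A family of formulas is `h^⫝`-inconsistent with respect to `P = tp(a₀/Ms)`. -/
def HInconsistent (R : IndRel L 𝕄) (Ms : Set 𝕄) {α : Type v} (a₀ : α → 𝕄)
    {ι : Type w} (m : ι → ℕ) (φ : ∀ i : ι, L.Formula (α ⊕ Fin (m i)))
    (b : ∀ i : ι, Fin (m i) → 𝕄) : Prop :=
  ¬ ∃ a : α → 𝕄, EqTpOver L Ms a a₀ ∧
      R.rel (Set.range a) Ms (⋃ i, Set.range (b i)) ∧
      ∀ i, (φ i).Realize (Sum.elim a (b i))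

/-- A single formula is `h^⫝`-inconsistent with respect to `P = tp(a₀/Ms)`. -/
def HInconsistentSingle (R : IndRel L 𝕄) (Ms : Set 𝕄) {α : Type v} (a₀ : α → 𝕄)
    {n : ℕ} (φ : L.Formula (α ⊕ Fin n)) (b : Fin n → 𝕄) : Prop :=
  ¬ ∃ a : α → 𝕄, EqTpOver L Ms a a₀ ∧ R.rel (Set.range a) Ms (Set.range b) ∧
      φ.Realize (Sum.elim a b)

/-- `φ(x, b)` `h^⫝`-Kim-divides with respect to `tp(a₀/Ms)`. -/
def HKimDivides (R : IndRel L 𝕄) (Ms : Set 𝕄) {α : Type v} (a₀ : α → 𝕄)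
    {n : ℕ} (φ : L.Formula (α ⊕ Fin n)) (b : Fin n → 𝕄) : Prop :=
  ∃ B : ℕ → Fin n → 𝕄, CoheirMorley L Ms B ∧ B 0 = b ∧
    HInconsistent R Ms a₀ (fun _ : ℕ => n) (fun _ => φ) B

/-- `φ(x, b)` `h^⫝`-Kim-forks with respect to `tp(a₀/Ms)`. -/
def HKimForks (R : IndRel L 𝕄) (Ms : Set 𝕄) {α : Type v} (a₀ : α → 𝕄)
    {n : ℕ} (φ : L.Formula (α ⊕ Fin n)) (b : Fin n → 𝕄) : Prop :=
  ∃ (N : ℕ) (m : Fin N → ℕ) (ψ : ∀ j : Fin N, L.Formula (α ⊕ Fin (m j)))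
    (c : ∀ j : Fin N, Fin (m j) → 𝕄),
    (∀ j, HKimDivides R Ms a₀ (ψ j) (c j)) ∧
    ∀ a : α → 𝕄, φ.Realize (Sum.elim a b) → ∃ j, (ψ j).Realize (Sum.elim a (c j))

/-- `φ(x, b)` `h^⫝`-quasi-divides with respect to `tp(a₀/Ms)`. -/
def HQuasiDivides (R : IndRel L 𝕄) (Ms : Set 𝕄) {α : Type v} (a₀ : α → 𝕄)
    {n : ℕ} (φ : L.Formula (α ⊕ Fin n)) (b : Fin n → 𝕄) : Prop :=
  ∃ (mm : ℕ) (b' : Fin mm → Fin n → 𝕄), 0 < mm ∧ (∀ j, EqTpOver L Ms (b' j) b) ∧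
    HInconsistent R Ms a₀ (fun _ : Fin mm => n) (fun _ => φ) b'

/-- The derived relation `⫝'` on tuples:
`tp(a / Ms b)` contains no formula `h^⫝`-Kim-forking w.r.t. `tp(a/Ms)`. -/
def DerivedIndep (R : IndRel L 𝕄) (Ms : Set 𝕄) {α : Type v} {β : Type w}
    (a : α → 𝕄) (b : β → 𝕄) : Prop :=
  ∀ (n : ℕ) (φ : L.Formula (α ⊕ Fin n)) (d : Fin n → 𝕄),
    (∀ i, d i ∈ Ms ∪ Set.range b) → φ.Realize (Sum.elim a d) →
    ¬ HKimForks R Ms a φ d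

/-- The derived relation `⫝'` as a relation between sets over models. -/
def derived (R : IndRel L 𝕄) : IndRel L 𝕄 where
  rel A Ms B := ∀ (n : ℕ) (φ : L.Formula (↥A ⊕ Fin n)) (d : Fin n → 𝕄),
    (∀ i, d i ∈ Ms ∪ B) → φ.Realize (Sum.elim (fun x : A => (x : 𝕄)) d) →
    ¬ HKimForks R Ms (fun x : A => (x : 𝕄)) φ d

/-! ### Coheir trees -/

/-- The tuple, indexed by extensions, consisting of the part of the tree `c`
lying (weakly) above the node `ν` (where `ν` has length `Lh`). -/
def subtreeTupleLen {α : Type v} {n : ℕ} (c : {l : List ℕ // l.length ≤ n} → α → 𝕄)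
    (Lh : ℕ) (ν : List ℕ) (hν : ν.length = Lh) :
    ({s : List ℕ // Lh + s.length ≤ n} × α) → 𝕄 :=
  fun p => c ⟨ν ++ p.1.1, by rw [List.length_append, hν]; exact p.1.2⟩ p.2

end NSOP2Paper

/-
Forking equals dividing. Suppose `φ(x, b) ⊢ ⋁ⱼ ψⱼ(x, cⱼ)` with every `ψⱼ(x, cⱼ)` Conant-dividing,
yet `φ` is consistent along a Morley sequence in a global coheir `q` starting with `b`. Since `M` is
a model, `q(x) ∪ tp(bc/M)` extends to a global coheir `q'`. Take a Morley sequence `(bᵢcᵢ)` in `q'`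
starting with `bc`; then `(bᵢ)` is Morley in `q`, and Morley sequences in a coheir all have the same
type over `M`, so some `a'` realizes every `φ(x, bᵢ)`. As `bᵢcᵢ ≡_M bc`, each `i` gives some `j`
with `ψⱼ(a', cⱼᵢ)`, so one `j` occurs infinitely often. That subsequence of `(cⱼᵢ)ᵢ` is again
Morley, so `ψⱼ` is consistent along `(cⱼᵢ)ᵢ`, a Morley sequence starting with `cⱼ`: a
contradiction.

Right extension. Conant-forking formulas form an ideal, so `tp(a/Mb)` together with the negations
of all Conant-forking formulas over `Mbc` is finitely consistent; realize it in the monster.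
-/

namespace NSOP2Paper

variable {L : FirstOrder.Language.{u, u}} {𝕄 : Type u} [L.Structure 𝕄]

section FormulasWithParameters

theorem realize_relabel_map_left {γ : Type v} {δ : Type w} {ι : Type*}
    (θ : L.Formula (γ ⊕ ι)) (ρ : γ → δ) (a : δ → 𝕄) (d : ι → 𝕄) :
    (θ.relabel (Sum.map ρ id)).Realize (Sum.elim a d) ↔ θ.Realize (Sum.elim (a ∘ ρ) d) := by
  rw [Formula.realize_relabel, Sum.elim_comp_map]
  rfl

theorem realize_relabel_map_right {γ : Type v} {δ : Type w} {α : Type*}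
    (θ : L.Formula (α ⊕ γ)) (ρ : γ → δ) (a : α → 𝕄) (d : δ → 𝕄) :
    (θ.relabel (Sum.map id ρ)).Realize (Sum.elim a d) ↔ θ.Realize (Sum.elim a (d ∘ ρ)) := by
  rw [Formula.realize_relabel, Sum.elim_comp_map]
  rfl

def FmlP.relabelVars {α : Type v} {β : Type w} (ρ : α → β) (p : FmlP L 𝕄 α) : FmlP L 𝕄 β :=
  ⟨p.1, (p.2.1.relabel (Sum.map ρ id), p.2.2)⟩

theorem FmlP.realize_relabelVars {α : Type v} {β : Type w} (ρ : α → β) (p : FmlP L 𝕄 α)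
    (a : β → 𝕄) :
    (p.relabelVars ρ).2.1.Realize (Sum.elim a (p.relabelVars ρ).2.2) ↔
      p.2.1.Realize (Sum.elim (a ∘ ρ) p.2.2) :=
  realize_relabel_map_left _ _ _ _

noncomputable def FmlP.ofFinite {α : Type v} {ι : Type w} [Finite ι] (φ : L.Formula (α ⊕ ι))
    (c : ι → 𝕄) : FmlP L 𝕄 α :=
  ⟨Nat.card ι, (φ.relabel (Sum.map id (Finite.equivFin ι)), c ∘ (Finite.equivFin ι).symm)⟩

theorem FmlP.realize_ofFinite {α : Type v} {ι : Type w} [Finite ι] (φ : L.Formula (α ⊕ ι))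
    (c : ι → 𝕄) (a : α → 𝕄) :
    (FmlP.ofFinite φ c).2.1.Realize (Sum.elim a (FmlP.ofFinite φ c).2.2) ↔
      φ.Realize (Sum.elim a c) := by
  rw [FmlP.ofFinite, realize_relabel_map_right, Function.comp_assoc, Equiv.symm_comp_self]
  rfl

theorem FmlP.exists_conj {α : Type v} (t : Finset (FmlP L 𝕄 α)) {C : Set 𝕄}
    (ht : ∀ p ∈ t, ∀ i, p.2.2 i ∈ C) :
    ∃ p : FmlP L 𝕄 α, (∀ i, p.2.2 i ∈ C) ∧ ∀ a : α → 𝕄,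
      p.2.1.Realize (Sum.elim a p.2.2) ↔ ∀ p' ∈ t, p'.2.1.Realize (Sum.elim a p'.2.2) := by
  let c : (Σ p : t, Fin p.1.1) → 𝕄 := fun s => s.1.1.2.2 s.2
  refine ⟨FmlP.ofFinite (Formula.iInf fun p : t => p.1.2.1.relabel (Sum.map id (Sigma.mk p))) c,
    fun i => ht _ (Subtype.prop _) _, fun a => ?_⟩
  simp only [FmlP.realize_ofFinite, Formula.realize_iInf, realize_relabel_map_right]
  exact ⟨fun h p hp => h ⟨p, hp⟩, fun h p => h p.1 p.2⟩

end FormulasWithParameters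

section EqTpOver

variable {C : Set 𝕄} {α : Type v} {a b : α → 𝕄}

theorem EqTpOver.symm (h : EqTpOver L C a b) : EqTpOver L C b a :=
  fun n φ c hc => (h n φ c hc).symm

theorem EqTpOver.realize_iff (h : EqTpOver L C a b) {ι : Type w} [Finite ι]
    (φ : L.Formula (α ⊕ ι)) {c : ι → 𝕄} (hc : ∀ i, c i ∈ C) :
    φ.Realize (Sum.elim a c) ↔ φ.Realize (Sum.elim b c) := by
  rw [← FmlP.realize_ofFinite φ c a, ← FmlP.realize_ofFinite φ c b]
  exact h _ _ _ fun i => hc _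

theorem EqTpOver.realize_formula_iff (h : EqTpOver L C a b) (θ : L.Formula α) :
    θ.Realize a ↔ θ.Realize b := by
  have := h.realize_iff (θ.relabel Sum.inl) (c := Empty.elim) Empty.rec
  rwa [Formula.realize_relabel, Formula.realize_relabel] at this

theorem EqTpOver.comp (h : EqTpOver L C a b) {β : Type w} (ρ : β → α) :
    EqTpOver L C (a ∘ ρ) (b ∘ ρ) := by
  intro n ψ e he
  rw [← realize_relabel_map_left, ← realize_relabel_map_left]
  exact h n _ e he

theorem EqTpOver.sumElim (h : EqTpOver L C a b) {ι : Type w} [Finite ι] {c : ι → 𝕄}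
    (hc : ∀ i, c i ∈ C) : EqTpOver L C (Sum.elim a c) (Sum.elim b c) := by
  intro n ψ e he
  have key : ∀ a' : α → 𝕄, ψ.Realize (Sum.elim (Sum.elim a' c) e) ↔
      (ψ.relabel (Equiv.sumAssoc α ι (Fin n))).Realize (Sum.elim a' (Sum.elim c e)) := by
    intro a'
    rw [Formula.realize_relabel]
    exact iff_of_eq (congrArg _ (funext fun z => by rcases z with (z | z) | z <;> rfl))
  rw [key, key]
  exact h.realize_iff _ fun i => by rcases i with i | i; exacts [hc i, he i]

theorem eqTpOver_of_forall_tpSet {a' : α → 𝕄}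
    (h : ∀ (n : ℕ) (φ : L.Formula (α ⊕ Fin n)) (c : Fin n → 𝕄), (∀ i, c i ∈ C) →
      φ.Realize (Sum.elim a c) → φ.Realize (Sum.elim a' c)) :
    EqTpOver L C a' a := by
  intro n φ c hc
  refine ⟨fun h' => by_contra fun hna => ?_, h n φ c hc⟩
  exact (h n φ.not c hc (Formula.realize_not.2 hna)) h'

theorem EqTpOver.forall_imp_exists {β : Type w} [Finite β] {ι : Type*} [Finite ι]
    (h : EqTpOver L C a b) (φ : L.Formula (β ⊕ α)) (ψ : ι → L.Formula (β ⊕ α))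
    (himp : ∀ x, φ.Realize (Sum.elim x b) → ∃ j, (ψ j).Realize (Sum.elim x b)) :
    ∀ x, φ.Realize (Sum.elim x a) → ∃ j, (ψ j).Realize (Sum.elim x a) := by
  let θ : L.Formula α := ((φ.imp (Formula.iSup ψ)).relabel Sum.swap).iAlls β
  have hθ : ∀ g : α → 𝕄, θ.Realize g ↔
      ∀ x, φ.Realize (Sum.elim x g) → ∃ j, (ψ j).Realize (Sum.elim x g) := by
    intro g
    simp only [θ, Formula.realize_iAlls, Formula.realize_relabel, Sum.elim_swap,
      Formula.realize_imp, Formula.realize_iSup]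
  exact (hθ a).1 ((h.realize_formula_iff θ).2 ((hθ b).2 himp))

end EqTpOver

section GlobalTypes

variable {α : Type v} {C : Set 𝕄} {Ms : Set 𝕄}

def tpSet (C : Set 𝕄) (g : α → 𝕄) : Set (FmlP L 𝕄 α) :=
  {p | (∀ i, p.2.2 i ∈ C) ∧ p.2.1.Realize (Sum.elim g p.2.2)}

theorem RealizesType.mono {q : GlobalType L 𝕄 α} {g : α → 𝕄} {C' : Set 𝕄}
    (hg : RealizesType q g C') (h : C ⊆ C') : RealizesType q g C :=
  fun n φ e he hm => hg n φ e (fun i => h (he i)) hm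

theorem RealizesType.of_carrier_subset {q q' : GlobalType L 𝕄 α} {g : α → 𝕄}
    (hg : RealizesType q' g C) (h : q.carrier ⊆ q'.carrier) : RealizesType q g C :=
  fun n φ e he hm => hg n φ e he (h hm)

theorem RealizesType.realize_iff_mem {q : GlobalType L 𝕄 α} {g : α → 𝕄}
    (hg : RealizesType q g C) {n : ℕ} (φ : L.Formula (α ⊕ Fin n)) {e : Fin n → 𝕄}
    (he : ∀ i, e i ∈ C) :
    φ.Realize (Sum.elim g e) ↔ (⟨n, (φ, e)⟩ : FmlP L 𝕄 α) ∈ q.carrier := by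
  refine ⟨fun h => (q.complete n φ e).resolve_right fun hn => ?_, hg n φ e he⟩
  exact Formula.realize_not.1 (hg n φ.not e he hn) h

theorem RealizesType.realize_iff_mem_ofFinite {q : GlobalType L 𝕄 α} {g : α → 𝕄}
    (hg : RealizesType q g C) {ι : Type w} [Finite ι] (φ : L.Formula (α ⊕ ι)) {c : ι → 𝕄}
    (hc : ∀ i, c i ∈ C) : φ.Realize (Sum.elim g c) ↔ FmlP.ofFinite φ c ∈ q.carrier := by
  rw [← FmlP.realize_ofFinite]
  exact hg.realize_iff_mem _ fun i => hc _

theorem realizesType_of_tpSet_subset {q : GlobalType L 𝕄 α} {g : α → 𝕄}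
    (h : tpSet C g ⊆ q.carrier) : RealizesType q g C := by
  classical
  intro n θ e he hm
  by_contra hne
  have hnot : (⟨n, (θ.not, e)⟩ : FmlP L 𝕄 α) ∈ q.carrier := h ⟨he, Formula.realize_not.2 hne⟩
  obtain ⟨x, hx⟩ := q.consistent {⟨n, (θ, e)⟩, ⟨n, (θ.not, e)⟩} (by
    simp [Set.insert_subset_iff, hm, hnot])
  exact Formula.realize_not.1 (hx ⟨n, (θ.not, e)⟩ (by simp)) (hx ⟨n, (θ, e)⟩ (by simp))

theorem RealizesType.eqTpOver {q : GlobalType L 𝕄 α} {g h : α → 𝕄}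
    (hh : RealizesType q h C) (hg : tpSet C g ⊆ q.carrier) : EqTpOver L C h g :=
  eqTpOver_of_forall_tpSet fun n φ c hc hφ => hh n φ c hc (hg ⟨hc, hφ⟩)

def GlobalType.ofUltrafilter (U : Ultrafilter (α → 𝕄)) : GlobalType L 𝕄 α where
  carrier := {p | {m | p.2.1.Realize (Sum.elim m p.2.2)} ∈ U}
  consistent t ht := (Ultrafilter.nonempty_of_mem ((Filter.biInter_finset_mem t).2 ht)).imp
    fun _ hm => by simpa using hm
  complete n φ c := U.em fun m => φ.Realize (Sum.elim m c)

theorem GlobalType.finSatInM_ofUltrafilter {U : Ultrafilter (α → 𝕄)}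
    (hU : {m : α → 𝕄 | ∀ i, m i ∈ Ms} ∈ U) :
    (GlobalType.ofUltrafilter (L := L) U).FinSatInM Ms := by
  intro t ht
  obtain ⟨m, hm, hmt⟩ :=
    Ultrafilter.nonempty_of_mem (Filter.inter_mem hU ((Filter.biInter_finset_mem t).2 ht))
  exact ⟨m, hm, by simpa using hmt⟩

theorem exists_globalType_finSatInM (Γ : Set (FmlP L 𝕄 α))
    (hΓ : ∀ t : Finset (FmlP L 𝕄 α), ↑t ⊆ Γ →
      ∃ m : α → 𝕄, (∀ i, m i ∈ Ms) ∧ ∀ p ∈ t, p.2.1.Realize (Sum.elim m p.2.2)) :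
    ∃ q : GlobalType L 𝕄 α, Γ ⊆ q.carrier ∧ q.FinSatInM Ms := by
  classical
  let X : Set (α → 𝕄) := {m | ∀ i, m i ∈ Ms}
  let S : FmlP L 𝕄 α → Set (α → 𝕄) := fun p => {m | p.2.1.Realize (Sum.elim m p.2.2)}
  obtain ⟨U, hU⟩ := Ultrafilter.exists_ultrafilter_of_finite_inter_nonempty (insert X (S '' Γ))
    fun T hT => by
      have hT' : ↑(T.erase X) ⊆ S '' Γ := fun Y hY => by
        obtain ⟨hne, hY⟩ := Finset.mem_erase.1 hY
        exact (hT hY).resolve_left hne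
      obtain ⟨t, ht, hTt⟩ := Finset.subset_set_image_iff.1 hT'
      obtain ⟨m, hm, hmt⟩ := hΓ t ht
      refine ⟨m, fun Y hY => ?_⟩
      by_cases hYX : Y = X
      · exact hYX ▸ hm
      · have hY' : Y ∈ t.image S := hTt ▸ Finset.mem_erase.2 ⟨hYX, hY⟩
        obtain ⟨p, hp, rfl⟩ := Finset.mem_image.1 hY'
        exact hmt p hp
  exact ⟨GlobalType.ofUltrafilter U, fun p hp => hU (Set.mem_insert_of_mem _ ⟨p, hp, rfl⟩),
    GlobalType.finSatInM_ofUltrafilter (hU (Set.mem_insert _ _))⟩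

def GlobalType.comap {μ : Type w} (q : GlobalType L 𝕄 μ) (ρ : α → μ) : GlobalType L 𝕄 α where
  carrier := FmlP.relabelVars ρ ⁻¹' q.carrier
  consistent t ht := by
    classical
    obtain ⟨d, hd⟩ := q.consistent (t.image (FmlP.relabelVars ρ))
      (by rw [Finset.coe_image, Set.image_subset_iff]; exact ht)
    exact ⟨d ∘ ρ, fun p hp =>
      (FmlP.realize_relabelVars ρ p d).1 (hd _ (Finset.mem_image_of_mem _ hp))⟩
  complete n φ c := q.complete n (φ.relabel (Sum.map ρ id)) c

theorem GlobalType.FinSatInM.comap {μ : Type w} {q : GlobalType L 𝕄 μ} (hq : q.FinSatInM Ms)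
    (ρ : α → μ) : (q.comap ρ).FinSatInM Ms := by
  classical
  intro t ht
  obtain ⟨d, hdMs, hd⟩ := hq (t.image (FmlP.relabelVars ρ))
    (by rw [Finset.coe_image, Set.image_subset_iff]; exact ht)
  exact ⟨d ∘ ρ, fun i => hdMs (ρ i), fun p hp =>
    (FmlP.realize_relabelVars ρ p d).1 (hd _ (Finset.mem_image_of_mem _ hp))⟩

theorem GlobalType.FinSatInM.mem_of_eqTpOver [Finite α] {q : GlobalType L 𝕄 α}
    (hq : q.FinSatInM Ms) {n : ℕ} {φ : L.Formula (α ⊕ Fin n)} {c c' : Fin n → 𝕄}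
    (hcc' : EqTpOver L Ms c c') (h : (⟨n, (φ, c)⟩ : FmlP L 𝕄 α) ∈ q.carrier) :
    (⟨n, (φ, c')⟩ : FmlP L 𝕄 α) ∈ q.carrier := by
  classical
  refine (q.complete n φ c').resolve_right fun hn => ?_
  obtain ⟨m, hm, hmr⟩ := hq {⟨n, (φ, c)⟩, ⟨n, (φ.not, c')⟩} (by
    simp [Set.insert_subset_iff, h, hn])
  have hmc : φ.Realize (Sum.elim m c) := hmr ⟨n, (φ, c)⟩ (by simp)
  have hmc' : ¬ φ.Realize (Sum.elim m c') :=
    Formula.realize_not.1 (hmr ⟨n, (φ.not, c')⟩ (by simp))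
  have key := hcc'.realize_iff (φ.relabel Sum.swap) hm
  rw [Formula.realize_relabel, Formula.realize_relabel, Sum.elim_swap, Sum.elim_swap] at key
  exact hmc' (key.1 hmc)

theorem IsElemSubmodel.exists_realize_mem (hMs : IsElemSubmodel L Ms) {β : Type w} {γ : Type*}
    [Finite γ] {θ : L.Formula (β ⊕ γ)} {v : β → 𝕄} (hv : ∀ i, v i ∈ Ms)
    (h : (θ.iExs γ).Realize v) : ∃ w : γ → 𝕄, (∀ i, w i ∈ Ms) ∧ θ.Realize (Sum.elim v w) := by
  obtain ⟨S, rfl⟩ := hMs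
  let v' : β → S := fun i => ⟨v i, hv i⟩
  obtain ⟨w, hw⟩ := Formula.realize_iExs.1 ((S.subtype.map_formula (θ.iExs γ) v').1 h)
  refine ⟨Subtype.val ∘ w, fun i => (w i).2, ?_⟩
  have := (S.subtype.map_formula θ (Sum.elim v' w)).2 hw
  rwa [Sum.comp_elim] at this

theorem exists_finSatInM_extension (hMs : IsElemSubmodel L Ms) {γ : Type w} [Finite γ]
    {q : GlobalType L 𝕄 α} (hq : q.FinSatInM Ms) {b : α → 𝕄} (hb : RealizesType q b Ms)
    (c : γ → 𝕄) :
    ∃ q' : GlobalType L 𝕄 (α ⊕ γ), q'.FinSatInM Ms ∧ q.carrier ⊆ (q'.comap Sum.inl).carrier ∧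
      tpSet Ms (Sum.elim b c) ⊆ q'.carrier := by
  classical
  suffices hfin : ∀ t : Finset (FmlP L 𝕄 (α ⊕ γ)),
      ↑t ⊆ FmlP.relabelVars Sum.inl '' q.carrier ∪ tpSet Ms (Sum.elim b c) →
      ∃ m : α ⊕ γ → 𝕄, (∀ i, m i ∈ Ms) ∧ ∀ p ∈ t, p.2.1.Realize (Sum.elim m p.2.2) by
    obtain ⟨q', hΓ, hq'⟩ := exists_globalType_finSatInM _ hfin
    exact ⟨q', hq', fun p hp => hΓ (Or.inl ⟨p, hp, rfl⟩), fun p hp => hΓ (Or.inr hp)⟩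
  intro t ht
  obtain ⟨t₁, t₂, rfl, ht₁, ht₂⟩ := Finset.subset_union_elim ht
  obtain ⟨s, hs, rfl⟩ := Finset.subset_set_image_iff.1 ht₁
  obtain ⟨⟨k, Θ, e⟩, he, hΘ⟩ := FmlP.exists_conj t₂ (C := Ms) fun p hp => (ht₂ hp).1.1
  -- `Θ'(y, e, z) := Θ(y, z, e)`, so that `∃ z, Θ(y, z, e)` is a formula in `y` over `M`
  let Θ' : L.Formula ((α ⊕ Fin k) ⊕ γ) :=
    Θ.relabel (Sum.elim (Sum.elim (Sum.inl ∘ Sum.inl) Sum.inr) (Sum.inl ∘ Sum.inr))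
  have hΘ' : ∀ y z,
      Θ'.Realize (Sum.elim (Sum.elim y e) z) ↔ Θ.Realize (Sum.elim (Sum.elim y z) e) := by
    intro y z
    rw [Formula.realize_relabel]
    exact iff_of_eq (congrArg _ (funext fun x => by rcases x with (x | x) | x <;> rfl))
  have hΞ : (⟨k, (Θ'.iExs γ, e)⟩ : FmlP L 𝕄 α) ∈ q.carrier := by
    refine (hb.realize_iff_mem _ he).1 (Formula.realize_iExs.2 ⟨c, (hΘ' b c).2 ?_⟩)
    exact (hΘ _).2 fun p hp => (ht₂ hp).1.2
  obtain ⟨m, hm, hmr⟩ := hq (insert ⟨k, (Θ'.iExs γ, e)⟩ s) (by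
    simpa [Set.insert_subset_iff] using ⟨hΞ, hs⟩)
  obtain ⟨w, hw, hmw⟩ := hMs.exists_realize_mem (v := Sum.elim m e)
    (fun i => by rcases i with i | i; exacts [hm i, he i]) (hmr _ (Finset.mem_insert_self _ _))
  refine ⟨Sum.elim m w, fun i => by rcases i with i | i; exacts [hm i, hw i], fun p hp => ?_⟩
  rcases Finset.mem_union.1 hp with hp | hp
  · obtain ⟨p₀, hp₀, rfl⟩ := Finset.mem_image.1 hp
    exact (FmlP.realize_relabelVars _ _ _).2 (hmr _ (Finset.mem_insert_of_mem hp₀))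
  · exact (hΘ _).1 ((hΘ' m w).1 hmw) p hp

end GlobalTypes

section Saturation

variable {κ : Cardinal.{u}}

theorem mk_union_countable_lt (hκ : Cardinal.aleph0 < κ) {A U : Set 𝕄}
    (hA : Cardinal.mk A < κ) (hU : U.Countable) : Cardinal.mk ↥(A ∪ U) < κ :=
  (Cardinal.mk_union_le _ _).trans_lt
    (Cardinal.add_lt_of_lt hκ.le hA (hU.le_aleph0.trans_lt hκ))

/-- `IsSaturated` only speaks of variable types in `Type u`; finite ones may live anywhere. -/
theorem IsSaturated.exists_realize_of_finite (hsat : IsSaturated L 𝕄 κ)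
    (hκ : Cardinal.aleph0 < κ) {γ : Type v} [Finite γ] {Γ : Set (FmlP L 𝕄 γ)} {A : Set 𝕄}
    (hA : Cardinal.mk A < κ) (hparams : ∀ p ∈ Γ, ∀ i, p.2.2 i ∈ A)
    (hfin : ∀ t : Finset (FmlP L 𝕄 γ), ↑t ⊆ Γ →
      ∃ a : γ → 𝕄, ∀ p ∈ t, p.2.1.Realize (Sum.elim a p.2.2)) :
    ∃ a : γ → 𝕄, ∀ p ∈ Γ, p.2.1.Realize (Sum.elim a p.2.2) := by
  classical
  let e : γ ≃ ULift.{u} (Fin (Nat.card γ)) := (Finite.equivFin γ).trans Equiv.ulift.symm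
  obtain ⟨a, ha⟩ := hsat _ A ((Cardinal.lt_aleph0_of_finite _).trans hκ) hA
    (FmlP.relabelVars e '' Γ) (by rintro _ ⟨p, hp, rfl⟩; exact hparams p hp) (fun t ht => by
      obtain ⟨s, hs, rfl⟩ := Finset.subset_set_image_iff.1 ht
      obtain ⟨a, ha⟩ := hfin s hs
      refine ⟨a ∘ e.symm, fun p hp => ?_⟩
      obtain ⟨p₀, hp₀, rfl⟩ := Finset.mem_image.1 hp
      rw [FmlP.realize_relabelVars, Function.comp_assoc, Equiv.symm_comp_self]
      exact ha p₀ hp₀)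
  exact ⟨a ∘ e, fun p hp => (FmlP.realize_relabelVars e p a).1 (ha _ ⟨p, hp, rfl⟩)⟩

theorem IsSaturated.exists_realizesType (hsat : IsSaturated L 𝕄 κ)
    (hκ : Cardinal.aleph0 < κ) {γ : Type v} [Finite γ] (q : GlobalType L 𝕄 γ) {C : Set 𝕄}
    (hC : Cardinal.mk C < κ) : ∃ d : γ → 𝕄, RealizesType q d C := by
  obtain ⟨d, hd⟩ := hsat.exists_realize_of_finite hκ (Γ := {p ∈ q.carrier | ∀ i, p.2.2 i ∈ C})
    hC (fun p hp => hp.2) (fun t ht => q.consistent t fun p hp => (ht hp).1)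
  exact ⟨d, fun n φ e he hm => hd ⟨n, (φ, e)⟩ ⟨hm, he⟩⟩

end Saturation

section Morley

variable {ν : Type v} {Ms : Set 𝕄} {q : GlobalType L 𝕄 ν} {B : ℕ → ν → 𝕄}

theorem MorleyIn.of_carrier_subset {q' : GlobalType L 𝕄 ν} (h : MorleyIn q' Ms B)
    (hq : q.FinSatInM Ms) (hsub : q.carrier ⊆ q'.carrier) : MorleyIn q Ms B :=
  ⟨hq, fun i => (h.2 i).of_carrier_subset hsub⟩

theorem MorleyIn.comap {μ : Type w} {q : GlobalType L 𝕄 μ} {D : ℕ → μ → 𝕄}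
    (h : MorleyIn q Ms D) (ρ : ν → μ) : MorleyIn (q.comap ρ) Ms (fun i => D i ∘ ρ) := by
  refine ⟨h.1.comap ρ, fun i n φ e he hm =>
    (FmlP.realize_relabelVars ρ ⟨n, (φ, e)⟩ (D i)).1 ?_⟩
  refine (h.2 i).mono (Set.union_subset_union_right _ ?_) n _ e he hm
  exact Set.iUnion₂_mono fun j _ => Set.range_comp_subset_range ρ (D j)

theorem MorleyIn.comp_strictMono (h : MorleyIn q Ms B) {f : ℕ → ℕ} (hf : StrictMono f) :
    MorleyIn q Ms (B ∘ f) := by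
  refine ⟨h.1, fun i => (h.2 (f i)).mono (Set.union_subset_union_right _ ?_)⟩
  exact Set.iUnion₂_subset fun j hj => Set.subset_iUnion₂_of_subset (f j) (hf hj) subset_rfl

theorem exists_morleyIn {κ : Cardinal.{u}} (hsat : IsSaturated L 𝕄 κ)
    (hκ : Cardinal.aleph0 < κ) [Finite ν] (hMs : Cardinal.mk Ms < κ) (hq : q.FinSatInM Ms)
    {d : ν → 𝕄} (hd : RealizesType q d Ms) : ∃ D : ℕ → ν → 𝕄, MorleyIn q Ms D ∧ D 0 = d := by
  classical
  have hpick : ∀ U : Set 𝕄, ∃ d' : ν → 𝕄, U.Countable → RealizesType q d' (Ms ∪ U) := fun U =>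
    if hU : U.Countable then
      (hsat.exists_realizesType hκ q (mk_union_countable_lt hκ hMs hU)).imp fun _ h _ => h
    else ⟨d, fun h => absurd h hU⟩
  choose pick hpick using hpick
  let D : ℕ → ν → 𝕄 := Nat.strongRec fun i prev =>
    if i = 0 then d else pick (⋃ (j : ℕ) (hj : j < i), Set.range (prev j hj))
  have hD : ∀ i, D i = if i = 0 then d else pick (⋃ (j : ℕ) (_ : j < i), Set.range (D j)) :=
    fun i => Nat.strongRec_eq _ i
  refine ⟨D, ⟨hq, fun i => ?_⟩, by rw [hD, if_pos rfl]⟩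
  rw [hD]
  split_ifs with hi
  · subst hi
    exact hd.mono (by simp)
  · exact hpick _ (Set.countable_iUnion fun j => Set.countable_iUnion fun _ =>
      (Set.finite_range _).countable)

theorem MorleyIn.eqTpOver_rows [Finite ν] {B' : ℕ → ν → 𝕄} (hB : MorleyIn q Ms B)
    (hB' : MorleyIn q Ms B') (n : ℕ) :
    EqTpOver L Ms (fun p : Fin n × ν => B p.1 p.2) (fun p : Fin n × ν => B' p.1 p.2) := by
  induction n with
  | zero =>
    intro k φ e he
    exact iff_of_eq (congrArg _ (congrArg₂ _ (funext fun p => p.1.elim0) rfl))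
  | succ n ih =>
    intro k φ e he
    -- the last row becomes the variable, the earlier rows become parameters
    let ρ : (Fin (n + 1) × ν) ⊕ Fin k → ν ⊕ ((Fin n × ν) ⊕ Fin k) :=
      Sum.elim (fun p => Fin.lastCases (Sum.inl p.2) (fun i => Sum.inr (Sum.inl (i, p.2))) p.1)
        (Sum.inr ∘ Sum.inr)
    have hrow : ∀ D : ℕ → ν → 𝕄,
        RealizesType q (D n) (Ms ∪ ⋃ (j : ℕ) (_ : j < n), Set.range (D j)) →
        (φ.Realize (Sum.elim (fun p : Fin (n + 1) × ν => D p.1 p.2) e) ↔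
          FmlP.ofFinite (φ.relabel ρ) (Sum.elim (fun p : Fin n × ν => D p.1 p.2) e) ∈
            q.carrier) := by
      intro D hD
      have hc : ∀ j, Sum.elim (fun p : Fin n × ν => D p.1 p.2) e j ∈
          Ms ∪ ⋃ (j : ℕ) (_ : j < n), Set.range (D j) := by
        rintro (⟨j, w⟩ | j)
        exacts [Or.inr (Set.mem_iUnion₂.2 ⟨j, j.2, w, rfl⟩), Or.inl (he j)]
      have key := hD.realize_iff_mem_ofFinite (φ.relabel ρ) hc
      rw [Formula.realize_relabel] at key
      refine Iff.trans (iff_of_eq (congrArg _ (funext fun x => ?_))) key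
      rcases x with ⟨i, w⟩ | j
      · induction i using Fin.lastCases <;> simp [ρ]
      · rfl
    have hpar := (ih.sumElim he).comp (Finite.equivFin ((Fin n × ν) ⊕ Fin k)).symm
    rw [hrow B (hB.2 n), hrow B' (hB'.2 n)]
    exact ⟨hB.1.mem_of_eqTpOver hpar, hB.1.mem_of_eqTpOver hpar.symm⟩

theorem MorleyIn.exists_realize_of_morleyIn {κ : Cardinal.{u}} (hsat : IsSaturated L 𝕄 κ)
    (hκ : Cardinal.aleph0 < κ) {m : ℕ} {q : GlobalType L 𝕄 (Fin m)} {C C' : ℕ → Fin m → 𝕄}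
    (hC : MorleyIn q Ms C) (hC' : MorleyIn q Ms C') {α : Type w} [Finite α]
    {φ : L.Formula (α ⊕ Fin m)} {x : α → 𝕄} (hx : ∀ i, φ.Realize (Sum.elim x (C i))) :
    ∃ x' : α → 𝕄, ∀ i, φ.Realize (Sum.elim x' (C' i)) := by
  classical
  have hrows : ∀ n : ℕ, ∃ x' : α → 𝕄, ∀ i : Fin n, φ.Realize (Sum.elim x' (C' i)) := by
    intro n
    let Ξ : L.Formula (Fin n × Fin m) := (Formula.iInf fun i : Fin n =>
      φ.relabel (Sum.elim Sum.inr fun w => Sum.inl (i, w))).iExs α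
    have hΞ : ∀ D : ℕ → Fin m → 𝕄, Ξ.Realize (fun p : Fin n × Fin m => D p.1 p.2) ↔
        ∃ y : α → 𝕄, ∀ i : Fin n, φ.Realize (Sum.elim y (D i)) := by
      intro D
      simp only [Ξ, Formula.realize_iExs, Formula.realize_iInf, Formula.realize_relabel]
      exact exists_congr fun y => forall_congr' fun i =>
        iff_of_eq (congrArg _ (funext fun z => by rcases z with z | z <;> rfl))
    exact (hΞ C').1 (((hC.eqTpOver_rows hC' n).realize_formula_iff Ξ).1
      ((hΞ C).2 ⟨x, fun i => hx i⟩))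
  obtain ⟨x', hx'⟩ := hsat.exists_realize_of_finite hκ
    (Γ := Set.range fun i => (⟨m, (φ, C' i)⟩ : FmlP L 𝕄 α)) (A := ⋃ i, Set.range (C' i))
    ((Set.countable_iUnion fun i => (Set.finite_range (C' i)).countable).le_aleph0.trans_lt hκ)
    (by rintro _ ⟨i, rfl⟩ w; exact Set.mem_iUnion.2 ⟨i, w, rfl⟩)
    (fun t ht => by
      rw [← Set.image_univ] at ht
      obtain ⟨s, -, rfl⟩ := Finset.subset_set_image_iff.1 ht
      obtain ⟨y, hy⟩ := hrows (s.sup id + 1)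
      refine ⟨y, fun p hp => ?_⟩
      obtain ⟨i, hi, rfl⟩ := Finset.mem_image.1 hp
      exact hy ⟨i, Nat.lt_succ_of_le (Finset.le_sup (f := id) hi)⟩)
  exact ⟨x', fun i => hx' _ ⟨i, rfl⟩⟩

end Morley

section Conant

variable {Ms : Set 𝕄} {α : Type v} {n : ℕ} {φ : L.Formula (α ⊕ Fin n)} {b : Fin n → 𝕄}

/-- Conant-forking formulas form an ideal. -/
theorem conantForks_of_forall_exists {ι : Type*} [Finite ι] {m : ι → ℕ}
    {ψ : ∀ i, L.Formula (α ⊕ Fin (m i))} {c : ∀ i, Fin (m i) → 𝕄}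
    (hψ : ∀ i, ConantForks L Ms (ψ i) (c i))
    (himp : ∀ x, φ.Realize (Sum.elim x b) → ∃ i, (ψ i).Realize (Sum.elim x (c i))) :
    ConantForks L Ms φ b := by
  choose N k θ d hdiv hcov using hψ
  let e := Finite.equivFin (Σ i, Fin (N i))
  refine ⟨Nat.card _, fun j => k (e.symm j).1 (e.symm j).2, fun j => θ _ _, fun j => d _ _,
    fun j => hdiv _ _, fun x hx => ?_⟩
  obtain ⟨i, hi⟩ := himp x hx
  obtain ⟨j, hj⟩ := hcov i x hi
  obtain ⟨s, hs⟩ : ∃ s : Σ i, Fin (N i), (θ s.1 s.2).Realize (Sum.elim x (d s.1 s.2)) :=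
    ⟨⟨i, j⟩, hj⟩
  refine ⟨e s, ?_⟩
  dsimp only
  rw [e.symm_apply_apply]
  exact hs

theorem ConantDivides.conantForks (h : ConantDivides L Ms φ b) : ConantForks L Ms φ b :=
  ⟨1, fun _ => n, fun _ => φ, fun _ => b, fun _ => h, fun _ hx => ⟨0, hx⟩⟩

theorem ConantDivides.finite_setOf_realize {κ : Cardinal.{u}} (hsat : IsSaturated L 𝕄 κ)
    (hκ : Cardinal.aleph0 < κ) [Finite α] (h : ConantDivides L Ms φ b)
    {q : GlobalType L 𝕄 (Fin n)} {E : ℕ → Fin n → 𝕄} (hE : MorleyIn q Ms E) (hE0 : E 0 = b)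
    (x : α → 𝕄) : {i | φ.Realize (Sum.elim x (E i))}.Finite := by
  by_contra hinf
  obtain ⟨x', hx'⟩ := (hE.comp_strictMono (Nat.nth_strictMono hinf)).exists_realize_of_morleyIn
    hsat hκ hE fun i => Nat.nth_mem_of_infinite hinf i
  exact h E ⟨q, hE⟩ hE0 ⟨x', hx'⟩

theorem ConantForks.conantDivides {κ : Cardinal.{u}} (hsat : IsSaturated L 𝕄 κ)
    (hκ : Cardinal.aleph0 < κ) (hMs : IsElemSubmodel L Ms) (hMsκ : Cardinal.mk Ms < κ)
    {r : ℕ} {φ : L.Formula (Fin r ⊕ Fin n)} (h : ConantForks L Ms φ b) :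
    ConantDivides L Ms φ b := by
  obtain ⟨N, m, ψ, c, hdiv, himp⟩ := h
  rintro B ⟨q, hB⟩ rfl ⟨a, ha⟩
  let c' : (Σ j, Fin (m j)) → 𝕄 := fun s => c s.1 s.2
  obtain ⟨q', hq', hqq', htp⟩ :=
    exists_finSatInM_extension hMs hB.1 ((hB.2 0).mono Set.subset_union_left) c'
  obtain ⟨D, hD, hD0⟩ := exists_morleyIn hsat hκ hMsκ hq' (realizesType_of_tpSet_subset htp)
  obtain ⟨a', ha'⟩ := hB.exists_realize_of_morleyIn hsat hκ
    ((hD.comap Sum.inl).of_carrier_subset hB.1 hqq') ha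
  let ι : ∀ j, Fin (m j) → Fin n ⊕ (Σ j, Fin (m j)) := fun j w => Sum.inr ⟨j, w⟩
  have hcover : ∀ i, ∃ j, (ψ j).Realize (Sum.elim a' (D i ∘ ι j)) := by
    intro i
    have := ((hD.2 i).mono Set.subset_union_left).eqTpOver htp |>.forall_imp_exists
      (φ.relabel (Sum.map id Sum.inl)) (fun j => (ψ j).relabel (Sum.map id (ι j)))
      (by simp only [realize_relabel_map_right]; exact himp) a'
      ((realize_relabel_map_right _ _ _ _).2 (ha' i))
    simpa only [realize_relabel_map_right] using this
  choose jf hjf using hcover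
  obtain ⟨j, hj⟩ := Finite.exists_infinite_fiber jf
  refine (Set.infinite_coe_iff.1 hj).mono ?_ ((hdiv j).finite_setOf_realize hsat hκ
    (hD.comap (ι j)) (by rw [hD0]; rfl) a')
  intro i hi
  exact (hi : jf i = j) ▸ hjf i

theorem ConantIndep.exists_realize_finset {β : Type w} {a : α → 𝕄} {b : β → 𝕄}
    (hind : ConantIndep L Ms a b) (t : Finset (FmlP L 𝕄 α))
    (ht : ↑t ⊆ tpSet (Ms ∪ Set.range b) a ∪ {p | ConantForks L Ms p.2.1.not p.2.2}) :
    ∃ x : α → 𝕄, ∀ p ∈ t, p.2.1.Realize (Sum.elim x p.2.2) := by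
  classical
  obtain ⟨t₁, t₂, rfl, ht₁, ht₂⟩ := Finset.subset_union_elim ht
  obtain ⟨⟨k, Φ, e⟩, he, hΦ⟩ := FmlP.exists_conj t₁ fun p hp => (ht₁ hp).1
  by_contra! hnone
  refine hind k Φ e he ((hΦ a).2 fun p hp => (ht₁ hp).2)
    (conantForks_of_forall_exists (ι := t₂) (fun p => (ht₂ p.2).1) fun x hx => ?_)
  obtain ⟨p, hp, hpx⟩ := hnone x
  rcases Finset.mem_union.1 hp with hp | hp
  · exact absurd ((hΦ x).1 hx p hp) hpx
  · exact ⟨⟨p, hp⟩, Formula.realize_not.2 hpx⟩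

theorem ConantIndep.exists_extension {κ : Cardinal.{u}} (hsat : IsSaturated L 𝕄 κ)
    (hκ : Cardinal.aleph0 < κ) (hMsκ : Cardinal.mk Ms < κ) {α β γ : Type u}
    (hα : Cardinal.mk α < κ) (hβ : Cardinal.mk β < κ) (hγ : Cardinal.mk γ < κ)
    {a : α → 𝕄} {b : β → 𝕄} (hind : ConantIndep L Ms a b) (c : γ → 𝕄) :
    ∃ a' : α → 𝕄, EqTpOver L (Ms ∪ Set.range b) a' a ∧ ConantIndep L Ms a' (Sum.elim b c) := by
  have hA : Cardinal.mk ↥(Ms ∪ Set.range (Sum.elim b c)) < κ :=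
    (Cardinal.mk_union_le _ _).trans_lt (Cardinal.add_lt_of_lt hκ.le hMsκ
      (Cardinal.mk_range_le.trans_lt (by simpa using Cardinal.add_lt_of_lt hκ.le hβ hγ)))
  have hbA : Ms ∪ Set.range b ⊆ Ms ∪ Set.range (Sum.elim b c) :=
    Set.union_subset_union_right _ (Set.Sum.elim_range b c ▸ Set.subset_union_left)
  obtain ⟨a', ha'⟩ := hsat α _ hα hA (tpSet (Ms ∪ Set.range b) a ∪
      {p | (∀ i, p.2.2 i ∈ Ms ∪ Set.range (Sum.elim b c)) ∧ ConantForks L Ms p.2.1.not p.2.2})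
    (by rintro p (hp | hp) i; exacts [hbA (hp.1 i), hp.1 i])
    (fun t ht => hind.exists_realize_finset t (ht.trans (Set.union_subset_union_right _
      fun p hp => hp.2)))
  refine ⟨a', eqTpOver_of_forall_tpSet fun n φ e he hφ => ha' ⟨n, (φ, e)⟩ (Or.inl ⟨he, hφ⟩),
    fun n φ d hd hφ hforks => ?_⟩
  have hforks' : ConantForks L Ms φ.not.not d :=
    conantForks_of_forall_exists (ι := Unit) (fun _ => hforks) fun x hx =>
      ⟨(), by simpa only [Formula.realize_not, not_not] using hx⟩
  exact Formula.realize_not.1 (ha' ⟨n, (φ.not, d)⟩ (Or.inr ⟨hd, hforks'⟩)) hφ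

end Conant

/-- **Proposition 5.2.** In any complete first-order theory, Conant-forking
coincides with Conant-dividing for formulas, and Conant-independence
`⫝^{K*}` satisfies right extension. -/
theorem conant_forking_eq_dividing_and_right_extension (L : FirstOrder.Language.{u, u})
    (𝕄 : Type u) [L.Structure 𝕄] (κ : Cardinal.{u}) (hmonster : IsMonster L 𝕄 κ)
    (Ms : Set 𝕄) (hMs : IsElemSubmodel L Ms) (hMssmall : Cardinal.mk Ms < κ) :
    (∀ (r m : ℕ) (φ : L.Formula (Fin r ⊕ Fin m)) (b : Fin m → 𝕄),
      ConantForks L Ms φ b ↔ ConantDivides L Ms φ b) ∧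
    (∀ (α β γ : Type u), Cardinal.mk α < κ → Cardinal.mk β < κ → Cardinal.mk γ < κ →
      ∀ (a : α → 𝕄) (b : β → 𝕄) (c : γ → 𝕄), ConantIndep L Ms a b →
        ∃ a' : α → 𝕄, EqTpOver L (Ms ∪ Set.range b) a' a ∧
          ConantIndep L Ms a' (Sum.elim b c)) := by
  obtain ⟨hκ, hsat, -⟩ := hmonster
  exact ⟨fun _ _ _ _ => ⟨fun h => h.conantDivides hsat hκ hMs hMssmall,
      ConantDivides.conantForks⟩,
    fun _ _ _ hα hβ hγ _ _ c hind => hind.exists_extension hsat hκ hMssmall hα hβ hγ c⟩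

end NSOP2Paper
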